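/- arXiv:2308.09703 — 3 statements merged into one kernel-verified Lean document; each statement's English description precedes it below -/
import Mathlib

section
/- Let G be a chordal graph, let X ⊆ V(G) be a clique, and let L₁, …, L_t be the evaporation sequence of G with exception set X. For i ∈ {1,…,t} let G_i denote the induced subgraph G − (L₁ ∪ … ∪ L_{i−1}). Let i ∈ {1,…,t}, let C be a connected component of G[L_i], and let u, v ∈ C. Then N_{G_i}(u)∖{v} = N_{G_i}(v)∖{u}, where N_{G_i}(w) denotes the neighborhood of w in G_i. -/
/-- A graph is chordal if it contains no induced cycle of length at least 4. -/
def IsChordal {V : Type*} (G : SimpleGraph V) : Prop :=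
  ∀ n : ℕ, 4 ≤ n → IsEmpty (SimpleGraph.cycleGraph n ↪g G)

/-- The neighborhood of `v` inside the induced subgraph of `G` on the vertex set `R`. -/
def nbhdIn {V : Type*} (G : SimpleGraph V) (R : Set V) (v : V) : Set V :=
  {u | u ∈ R ∧ G.Adj u v}

/-- `v` is simplicial in the induced subgraph of `G` on `R`:
its neighborhood there is a clique. -/
def SimplicialIn {V : Type*} (G : SimpleGraph V) (R : Set V) (v : V) : Prop :=
  G.IsClique (nbhdIn G R v)

/-- The set of vertices remaining after `n` steps of the evaporation process of `G` with
exception set `X`: at each step all simplicial vertices of the current induced subgraph that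
are not in `X` are removed. -/
def evapR {V : Type*} (G : SimpleGraph V) (X : Set V) : ℕ → Set V
  | 0 => Set.univ
  | n + 1 =>
      evapR G X n \ {v | v ∈ evapR G X n ∧ v ∉ X ∧ SimplicialIn G (evapR G X n) v}

/-- The `i`-th set `L_i` of the evaporation sequence (for `i ≥ 1`): the vertices removed at
step `i` of the evaporation process. -/
def evapLayer {V : Type*} (G : SimpleGraph V) (X : Set V) (i : ℕ) : Set V :=
  evapR G X (i - 1) \ evapR G X i

/-- The evaporation time of `G` with exception set `X`: the length `t` of the evaporation
sequence, i.e. the least `t` with `evapR G X t = X`. -/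
noncomputable def evapTime {V : Type*} (G : SimpleGraph V) (X : Set V) : ℕ :=
  sInf {t | evapR G X t = X}

/-- The evaporation time of a vertex subset `S`: the largest index `i` such that
`L_i ∩ S ≠ ∅`. -/
noncomputable def evapTimeOf {V : Type*} (G : SimpleGraph V) (X S : Set V) : ℕ :=
  sSup {i | (evapLayer G X i ∩ S).Nonempty}

/-- `C` is a connected component of the induced subgraph of `G` on `S`:
a maximal subset of `S` inducing a connected subgraph. -/
def IsCompOf {V : Type*} (G : SimpleGraph V) (S C : Set V) : Prop :=
  C.Nonempty ∧ C ⊆ S ∧ (G.induce C).Connected ∧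
    ∀ D, C ⊆ D → D ⊆ S → (G.induce D).Connected → D = C

/-- The open neighborhood `N(S)` of a set of vertices. -/
def setNbhd {V : Type*} (G : SimpleGraph V) (S : Set V) : Set V :=
  {v | v ∉ S ∧ ∃ u ∈ S, G.Adj u v}

/-!
Two adjacent vertices that are both simplicial in `G_i` have the same closed neighborhood in
`G_i`: each lies in the other's neighborhood, which is a clique. Every vertex of `L_i` is
simplicial in `G_i`, so closed neighborhoods are constant along paths inside a component `C`
of `G[L_i]`; removing `u` and `v` turns this into the statement about open neighborhoods.
-/

lemma Set.diff_singleton_eq_of_insert_eq {α : Type*} {A B : Set α} {a b : α}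
    (ha : a ∉ A) (hb : b ∉ B) (h : insert a A = insert b B) : A \ {b} = B \ {a} := by
  ext w
  have hw := Set.ext_iff.mp h w
  simp only [Set.mem_insert_iff] at hw
  simp only [Set.mem_sdiff, Set.mem_singleton_iff]
  constructor
  · rintro ⟨hwA, hwb⟩
    exact ⟨(hw.mp (Or.inr hwA)).resolve_left hwb, fun hwa => ha (hwa ▸ hwA)⟩
  · rintro ⟨hwB, hwa⟩
    exact ⟨(hw.mpr (Or.inr hwB)).resolve_left hwa, fun hwb => hb (hwb ▸ hwB)⟩

section Simplicial

variable {V : Type*} {G : SimpleGraph V} {R : Set V}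

lemma notMem_nbhdIn_self (v : V) : v ∉ nbhdIn G R v :=
  fun h => G.loopless.irrefl v h.2

lemma SimplicialIn.insert_nbhdIn_subset {a b : V} (hsa : SimplicialIn G R a) (ha : a ∈ R)
    (hb : b ∈ R) (hab : G.Adj a b) : insert a (nbhdIn G R a) ⊆ insert b (nbhdIn G R b) := by
  rintro w (rfl | ⟨hwR, hwa⟩)
  · exact Or.inr ⟨ha, hab⟩
  · by_cases hwb : w = b
    · exact Or.inl hwb
    · exact Or.inr ⟨hwR, hsa ⟨hwR, hwa⟩ ⟨hb, hab.symm⟩ hwb⟩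

lemma insert_nbhdIn_eq_of_adj {a b : V} (hsa : SimplicialIn G R a) (hsb : SimplicialIn G R b)
    (ha : a ∈ R) (hb : b ∈ R) (hab : G.Adj a b) :
    insert a (nbhdIn G R a) = insert b (nbhdIn G R b) :=
  (hsa.insert_nbhdIn_subset ha hb hab).antisymm (hsb.insert_nbhdIn_subset hb ha hab.symm)

lemma insert_nbhdIn_eq_of_reachable {C : Set V} (hC : ∀ w ∈ C, w ∈ R ∧ SimplicialIn G R w)
    {a b : C} (hab : (G.induce C).Reachable a b) :
    insert (a : V) (nbhdIn G R a) = insert (b : V) (nbhdIn G R b) := by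
  obtain ⟨p⟩ := hab
  induction p with
  | nil => rfl
  | @cons x y _ hxy _ ih =>
    obtain ⟨hxR, hxs⟩ := hC x x.2
    obtain ⟨hyR, hys⟩ := hC y y.2
    exact (insert_nbhdIn_eq_of_adj hxs hys hxR hyR hxy).trans ih

end Simplicial

lemma simplicialIn_of_mem_evapLayer {V : Type*} {G : SimpleGraph V} {X : Set V} {i : ℕ} {w : V}
    (hw : w ∈ evapLayer G X i) :
    w ∈ evapR G X (i - 1) ∧ SimplicialIn G (evapR G X (i - 1)) w := by
  obtain ⟨hwR, hwN⟩ := hw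
  cases i with
  | zero => exact absurd hwR hwN
  | succ =>
    exact ⟨hwR, by_contra fun hns => hwN ⟨hwR, fun hrem => hns hrem.2.2⟩⟩

theorem evapLayer_component_neighborhoods_general {V : Type*} (G : SimpleGraph V)
    (X : Set V)
    (i : ℕ)
    (C : Set V) (hC : IsCompOf G (evapLayer G X i) C) (u v : V) (hu : u ∈ C) (hv : v ∈ C) :
    nbhdIn G (evapR G X (i - 1)) u \ {v} = nbhdIn G (evapR G X (i - 1)) v \ {u} := by
  have hsimp : ∀ w ∈ C, w ∈ evapR G X (i - 1) ∧ SimplicialIn G (evapR G X (i - 1)) w :=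
    fun w hw => simplicialIn_of_mem_evapLayer (hC.2.1 hw)
  have hclosed := insert_nbhdIn_eq_of_reachable hsimp (hC.2.2.1 ⟨u, hu⟩ ⟨v, hv⟩)
  exact Set.diff_singleton_eq_of_insert_eq (notMem_nbhdIn_self u) (notMem_nbhdIn_self v) hclosed

/-- Let `G` be chordal, `X` a clique, `L₁, …, L_t` the evaporation sequence
of `G` with exception set `X`, and `G_i = G − (L₁ ∪ ⋯ ∪ L_{i-1})` (whose vertex set is
`evapR G X (i-1)`). If `i ∈ {1,…,t}`, `C` is a connected component of `G[L_i]`, and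
`u, v ∈ C`, then `N_{G_i}(u) ∖ {v} = N_{G_i}(v) ∖ {u}`. -/
theorem evapLayer_component_neighborhoods {V : Type*} [Fintype V] (G : SimpleGraph V)
    (X : Set V) (hch : IsChordal G) (hX : G.IsClique X)
    (i : ℕ) (hi1 : 1 ≤ i) (hit : i ≤ evapTime G X)
    (C : Set V) (hC : IsCompOf G (evapLayer G X i) C) (u v : V) (hu : u ∈ C) (hv : v ∈ C) :
    nbhdIn G (evapR G X (i - 1)) u \ {v} = nbhdIn G (evapR G X (i - 1)) v \ {u} :=
  evapLayer_component_neighborhoods_general G X i C hC u v hu hv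
end

section
/- Let G be a chordal graph, let X ⊆ V(G) be a clique, and let L₁, …, L_t be the evaporation sequence of G with exception set X, with t ≥ 1. If G − X is connected and X ⊆ N(L_t) (every vertex of X has a neighbor in L_t), then X ∪ L_t is a clique. -/
section

variable {V : Type*} {G : SimpleGraph V}

lemma SimplicialIn.mono {A R : Set V} {v : V} (h : SimplicialIn G R v) (hAR : A ⊆ R) :
    SimplicialIn G A v :=
  Set.Pairwise.mono (fun _ hu => ⟨hAR hu.1, hu.2⟩ : nbhdIn G A v ⊆ nbhdIn G R v) h

lemma SimplicialIn.eq_or_adj {A : Set V} {v a b : V} (h : SimplicialIn G A v)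
    (ha : a ∈ A) (hav : G.Adj a v) (hb : b ∈ A) (hbv : G.Adj b v) : a = b ∨ G.Adj a b := by
  by_cases hab : a = b
  · exact .inl hab
  · exact .inr (h ⟨ha, hav⟩ ⟨hb, hbv⟩ hab)

namespace SimpleGraph

lemma Connected.exists_walk_support_subset {s : Set V} (h : (G.induce s).Connected) {a b : V}
    (ha : a ∈ s) (hb : b ∈ s) : ∃ p : G.Walk a b, ∀ v ∈ p.support, v ∈ s := by
  obtain ⟨q⟩ := h.preconnected ⟨a, ha⟩ ⟨b, hb⟩
  let p : G.Walk a b := q.map (Embedding.induce s).toHom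
  refine ⟨p, fun v hv => ?_⟩
  obtain ⟨w, -, rfl⟩ := List.mem_map.1 (Walk.support_map _ q ▸ hv)
  exact w.2

lemma Walk.eq_or_adj_of_support_subset_pair {a b : V} (p : G.Walk a b)
    (hp : ∀ v ∈ p.support, v = a ∨ v = b) : a = b ∨ G.Adj a b := by
  cases p with
  | nil => exact .inl rfl
  | cons hac q =>
    rcases hp _ (q.start_mem_support.tail _) with hca | rfl
    · exact absurd hca.symm hac.ne
    · exact .inr hac

theorem Walk.exists_walk_support_subset_of_simplicialIn {A B : Set V}
    (hsimp : ∀ w ∈ A \ B, SimplicialIn G A w) {a b : V} (p : G.Walk a b)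
    (hpA : ∀ v ∈ p.support, v ∈ A) (ha : a ∈ B) (hb : b ∈ B) :
    ∃ q : G.Walk a b, ∀ v ∈ q.support, v ∈ B := by
  induction hn : p.length using Nat.strong_induction_on generalizing a p with
  | _ n ih =>
  cases p with
  | nil => exact ⟨.nil, by simpa using ha⟩
  | @cons _ c _ hac p =>
    simp only [Walk.support_cons, List.mem_cons, forall_eq_or_imp] at hpA
    simp only [Walk.length_cons] at hn
    by_cases hc : c ∈ B
    · obtain ⟨q, hq⟩ := ih p.length (by omega) p hpA.2 hc rfl
      exact ⟨.cons hac q, by simpa [ha] using hq⟩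
    cases p with
    | nil => exact absurd hb hc
    | @cons _ d _ hcd p =>
      simp only [Walk.support_cons, List.mem_cons, forall_eq_or_imp] at hpA
      simp only [Walk.length_cons] at hn
      -- the walk enters and leaves `c ∉ B` through `a` and `d`, which are equal or adjacent
      obtain ⟨haA, hcA, hpA⟩ := hpA
      rcases (hsimp c ⟨hcA, hc⟩).eq_or_adj haA hac (hpA _ p.start_mem_support) hcd.symm
        with rfl | had
      · exact ih p.length (by omega) p hpA ha rfl
      · refine ih (p.cons had).length (by simp only [Walk.length_cons]; omega) (p.cons had) ?_ ha rfl
        simpa [haA] using hpA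

end SimpleGraph

open SimpleGraph

lemma simplicialIn_of_mem_evapLayer_s4 {X : Set V} {n : ℕ} {v : V}
    (hv : v ∈ evapLayer G X (n + 1)) : SimplicialIn G (evapR G X n) v := by
  by_contra hs
  exact hv.2 ⟨hv.1, fun h => hs h.2.2⟩

lemma exists_walk_support_subset_evapR {X : Set V} {a b : V} (p : G.Walk a b)
    (hp : ∀ v ∈ p.support, v ∉ X) (n : ℕ) (ha : a ∈ evapR G X n) (hb : b ∈ evapR G X n) :
    ∃ q : G.Walk a b, ∀ v ∈ q.support, v ∈ evapR G X n \ X := by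
  induction n with
  | zero => exact ⟨p, fun v hv => ⟨Set.mem_univ v, hp v hv⟩⟩
  | succ n ih =>
    obtain ⟨q, hq⟩ := ih ha.1 hb.1
    refine Walk.exists_walk_support_subset_of_simplicialIn (fun w hw => ?_) q hq
      ⟨ha, hp a p.start_mem_support⟩ ⟨hb, hp b p.end_mem_support⟩
    exact (simplicialIn_of_mem_evapLayer_s4 (n := n) ⟨hw.1.1, fun h => hw.2 ⟨h, hw.1.2⟩⟩).mono
      Set.sdiff_subset

lemma subset_evapR (X : Set V) (n : ℕ) : X ⊆ evapR G X n := by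
  induction n with
  | zero => exact Set.subset_univ X
  | succ n ih => exact fun x hx => ⟨ih hx, fun h => h.2.1 hx⟩

lemma evapR_evapTime {X : Set V} (ht : 1 ≤ evapTime G X) : evapR G X (evapTime G X) = X := by
  refine Nat.sInf_mem (s := {t | evapR G X t = X}) (Set.nonempty_iff_ne_empty.2 fun h => ?_)
  simp [evapTime, h] at ht

section LastLayer

variable {X : Set V} {n : ℕ} (hT : evapR G X (n + 1) = X)
include hT

lemma evapLayer_eq_evapR_diff : evapLayer G X (n + 1) = evapR G X n \ X := by
  simp [evapLayer, hT]

lemma isClique_evapLayer (hconn : (G.induce Xᶜ).Connected) :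
    G.IsClique (evapLayer G X (n + 1)) := by
  intro a ha b hb hab
  rw [evapLayer_eq_evapR_diff hT] at ha hb
  obtain ⟨p, hp⟩ := hconn.exists_walk_support_subset ha.2 hb.2
  obtain ⟨q, hq⟩ := exists_walk_support_subset_evapR p hp n ha.1 hb.1
  have hsimp (w : V) (hw : w ∈ evapR G X n \ X) : SimplicialIn G (evapR G X n \ X) w :=
    (simplicialIn_of_mem_evapLayer_s4 (by rwa [evapLayer_eq_evapR_diff hT])).mono Set.sdiff_subset
  obtain ⟨r, hr⟩ := Walk.exists_walk_support_subset_of_simplicialIn (B := {a, b})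
    (fun w hw => hsimp w hw.1) q hq (.inl rfl) (.inr rfl)
  exact (r.eq_or_adj_of_support_subset_pair hr).resolve_left hab

lemma adj_of_mem_setNbhd_evapLayer (hconn : (G.induce Xᶜ).Connected) {x y : V} (hxX : x ∈ X)
    (hxN : x ∈ setNbhd G (evapLayer G X (n + 1))) (hy : y ∈ evapLayer G X (n + 1)) :
    G.Adj x y := by
  obtain ⟨-, w, hw, hwx⟩ := hxN
  have hyX : y ∉ X := ((evapLayer_eq_evapR_diff hT).subset hy).2
  rcases eq_or_ne y w with rfl | hyw
  · exact hwx.symm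
  exact ((simplicialIn_of_mem_evapLayer_s4 hw).eq_or_adj (subset_evapR X n hxX) hwx.symm hy.1
    (isClique_evapLayer hT hconn hy hw hyw)).resolve_left fun h => hyX (h ▸ hxX)

end LastLayer

end

theorem clique_X_union_last_layer_general {V : Type*} (G : SimpleGraph V) (X : Set V)
    (hX : G.IsClique X) (ht : 1 ≤ evapTime G X)
    (hconn : (G.induce Xᶜ).Connected)
    (hN : X ⊆ setNbhd G (evapLayer G X (evapTime G X))) :
    G.IsClique (X ∪ evapLayer G X (evapTime G X)) := by
  obtain ⟨n, hn⟩ : ∃ n, evapTime G X = n + 1 := ⟨_, (Nat.sub_add_cancel ht).symm⟩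
  have hT : evapR G X (n + 1) = X := hn ▸ evapR_evapTime ht
  rw [hn] at hN ⊢
  have := G.symm
  exact Set.pairwise_union_of_symm.2 ⟨hX, isClique_evapLayer hT hconn,
    fun x hx y hy _ => adj_of_mem_setNbhd_evapLayer hT hconn hx (hN hx) hy⟩

/-- Let `G` be chordal, `X` a clique, `L₁, …, L_t` the evaporation sequence
of `G` with exception set `X`, with `t ≥ 1`. If `G − X` is connected and `X ⊆ N(L_t)`,
then `X ∪ L_t` is a clique. -/
theorem clique_X_union_last_layer {V : Type*} [Fintype V] (G : SimpleGraph V) (X : Set V)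
    (hch : IsChordal G) (hX : G.IsClique X) (ht : 1 ≤ evapTime G X)
    (hconn : (G.induce Xᶜ).Connected)
    (hN : X ⊆ setNbhd G (evapLayer G X (evapTime G X))) :
    G.IsClique (X ∪ evapLayer G X (evapTime G X)) :=
  clique_X_union_last_layer_general G X hX ht hconn hN
end

section
/- Suppose G is a graph and {Ĉ, Î, Q̂} is a partition of V(G) (parts may be empty) with the following properties: (1) Ĉ is a clique and Î is an independent set; (2) Q̂ is a clique or an independent set, and |Q̂| ≥ 2; (3) every vertex in Q̂ is adjacent to every vertex in Ĉ and is non-adjacent to every vertex in Î; (4) if Q̂ is a clique, then every vertex in Ĉ has a neighbor in Î; (5) if Q̂ is an independent set, then every vertex in Î has a non-neighbor in Ĉ. Then G is a split graph, and moreover Ĉ is the always-clique set of G, Î is the always-independent set of G, and Q̂ is the questioning set of G. -/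
/-- A set of vertices is independent if no two of its members are adjacent. -/
def IsIndep {V : Type*} (G : SimpleGraph V) (s : Set V) : Prop :=
  s.Pairwise fun u v => ¬ G.Adj u v

/-- `(C, I)` is a split partition of `G`: `C` and `I` are disjoint, cover all vertices,
`C` is a clique and `I` is an independent set (empty parts are allowed). -/
def IsSplitPartition {V : Type*} (G : SimpleGraph V) (C I : Set V) : Prop :=
  Disjoint C I ∧ C ∪ I = Set.univ ∧ G.IsClique C ∧ IsIndep G I

/-- A split graph: the vertex set can be partitioned into a clique and an independent set. -/
def IsSplit {V : Type*} (G : SimpleGraph V) : Prop :=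
  ∃ C I : Set V, IsSplitPartition G C I

/-- The always-clique set: vertices belonging to the clique part of every split partition. -/
def alwaysClique {V : Type*} (G : SimpleGraph V) : Set V :=
  {v | ∀ C I : Set V, IsSplitPartition G C I → v ∈ C}

/-- The always-independent set: vertices belonging to the independent part of every
split partition. -/
def alwaysIndep {V : Type*} (G : SimpleGraph V) : Set V :=
  {v | ∀ C I : Set V, IsSplitPartition G C I → v ∈ I}

/-- The questioning set: vertices placed in the clique part by some split partition and
in the independent part by some (other) split partition. -/
def questioning {V : Type*} (G : SimpleGraph V) : Set V :=
  {v | (∃ C I : Set V, IsSplitPartition G C I ∧ v ∈ C) ∧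
       (∃ C I : Set V, IsSplitPartition G C I ∧ v ∈ I)}

/-!
Passing to the complement graph exchanges cliques and independent sets, so we may assume that
`Q̂` is a clique. Then `(Ĉ ∪ Q̂, Î)` is a split partition, and moving any single `q ∈ Q̂` to the
independent side gives another one, so `Q̂` lies in the questioning set. A vertex of `Î` is never
in the clique part of a split partition: one of two adjacent vertices of `Q̂` is there, and it has
no neighbour in `Î`. Hence a vertex of `Ĉ`, having a neighbour in `Î`, is never in the independent
part. Since the three sets partition `V(G)`, these inclusions are equalities.
-/

section

variable {V : Type*} {G : SimpleGraph V} {C I : Set V} {u v : V}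

namespace IsSplitPartition

theorem disjoint (h : IsSplitPartition G C I) : Disjoint C I := h.1

theorem isClique (h : IsSplitPartition G C I) : G.IsClique C := h.2.2.1

theorem isIndep (h : IsSplitPartition G C I) : IsIndep G I := h.2.2.2

theorem union_eq (h : IsSplitPartition G C I) : C ∪ I = Set.univ := h.2.1

theorem mem_or_mem (h : IsSplitPartition G C I) (v : V) : v ∈ C ∨ v ∈ I := by
  simpa only [← Set.mem_union, h.union_eq] using Set.mem_univ v

theorem mem_clique_of_adj (h : IsSplitPartition G C I) (huv : G.Adj u v) (hv : v ∈ I) :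
    u ∈ C :=
  (h.mem_or_mem u).resolve_right fun hu => h.isIndep hu hv huv.ne huv

theorem mem_clique_or_mem_clique (h : IsSplitPartition G C I) (huv : G.Adj u v) :
    u ∈ C ∨ v ∈ C :=
  (h.mem_or_mem v).elim Or.inr fun hv => Or.inl (h.mem_clique_of_adj huv hv)

theorem compl (h : IsSplitPartition G C I) : IsSplitPartition Gᶜ I C :=
  ⟨h.disjoint.symm, Set.union_comm C I ▸ h.union_eq, G.isClique_compl.mpr h.isIndep,
    G.isIndepSet_compl.mpr h.isClique⟩

theorem diff_singleton_insert (h : IsSplitPartition G C I) (hq : ∀ u ∈ I, ¬ G.Adj v u) :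
    IsSplitPartition G (C \ {v}) (insert v I) := by
  refine ⟨Set.disjoint_insert_right.mpr
      ⟨fun hv => hv.2 rfl, h.disjoint.mono_left Set.sdiff_subset⟩,
    ?_, h.isClique.subset Set.sdiff_subset,
    h.isIndep.insert fun u hu _ => ⟨hq u hu, fun huv => hq u hu huv.symm⟩⟩
  ext w
  by_cases hw : w = v
  · simp [hw]
  · simpa [hw] using h.mem_or_mem w

end IsSplitPartition

theorem isSplitPartition_compl : IsSplitPartition Gᶜ I C ↔ IsSplitPartition G C I :=
  ⟨fun h => compl_compl G ▸ h.compl, IsSplitPartition.compl⟩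

theorem isSplit_compl : IsSplit Gᶜ ↔ IsSplit G :=
  ⟨fun ⟨C, I, h⟩ => ⟨I, C, isSplitPartition_compl.mp h⟩,
    fun ⟨C, I, h⟩ => ⟨I, C, h.compl⟩⟩

theorem alwaysClique_compl : alwaysClique Gᶜ = alwaysIndep G := by
  ext v
  exact ⟨fun hv C I h => hv I C h.compl, fun hv I C h => hv C I (isSplitPartition_compl.mp h)⟩

theorem alwaysIndep_compl : alwaysIndep Gᶜ = alwaysClique G := by
  ext v
  exact ⟨fun hv C I h => hv I C h.compl, fun hv I C h => hv C I (isSplitPartition_compl.mp h)⟩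

theorem questioning_compl : questioning Gᶜ = questioning G := by
  ext v
  constructor
  · rintro ⟨⟨I, C, h, hv⟩, ⟨I', C', h', hv'⟩⟩
    exact ⟨⟨C', I', isSplitPartition_compl.mp h', hv'⟩, ⟨C, I, isSplitPartition_compl.mp h, hv⟩⟩
  · rintro ⟨⟨C, I, h, hv⟩, ⟨C', I', h', hv'⟩⟩
    exact ⟨⟨I', C', h'.compl, hv'⟩, ⟨I, C, h.compl, hv⟩⟩

theorem disjoint_alwaysClique_alwaysIndep (hG : IsSplit G) :
    Disjoint (alwaysClique G) (alwaysIndep G) := by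
  obtain ⟨C, I, h⟩ := hG
  exact Set.disjoint_left.mpr fun v hC hI => h.disjoint.ne_of_mem (hC C I h) (hI C I h) rfl

theorem disjoint_alwaysClique_questioning : Disjoint (alwaysClique G) (questioning G) :=
  Set.disjoint_left.mpr fun _ hC ⟨_, C, I, h, hI⟩ => h.disjoint.ne_of_mem (hC C I h) hI rfl

theorem disjoint_alwaysIndep_questioning : Disjoint (alwaysIndep G) (questioning G) :=
  Set.disjoint_left.mpr fun _ hI ⟨⟨C, I, h, hC⟩, _⟩ => h.disjoint.ne_of_mem hC (hI C I h) rfl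

theorem eq_of_union_eq_univ_of_subset_of_disjoint {α : Type*} {s t u s' t' u' : Set α}
    (hcover : s ∪ t ∪ u = Set.univ) (hs : s ⊆ s') (ht : t ⊆ t') (hu : u ⊆ u')
    (hst : Disjoint s' t') (hsu : Disjoint s' u') (htu : Disjoint t' u') :
    s' = s ∧ t' = t ∧ u' = u := by
  simp only [Set.ext_iff, Set.mem_union, Set.subset_def, Set.disjoint_left] at *
  refine ⟨fun v => ?_, fun v => ?_, fun v => ?_⟩ <;> have := hcover v <;> grind

theorem split_partition_characterization_of_isClique {Chat Ihat Qhat : Set V}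
    (hdisjCI : Disjoint Chat Ihat) (hdisjIQ : Disjoint Ihat Qhat)
    (hcover : Chat ∪ Ihat ∪ Qhat = Set.univ) (hC : G.IsClique Chat) (hI : IsIndep G Ihat)
    (hQ : G.IsClique Qhat) (hQ2 : Qhat.Nontrivial)
    (hQC : ∀ q ∈ Qhat, ∀ c ∈ Chat, G.Adj q c) (hQI : ∀ q ∈ Qhat, ∀ i ∈ Ihat, ¬ G.Adj q i)
    (hCI : ∀ c ∈ Chat, ∃ i ∈ Ihat, G.Adj c i) :
    IsSplit G ∧ alwaysClique G = Chat ∧ alwaysIndep G = Ihat ∧ questioning G = Qhat := by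
  have hP : IsSplitPartition G (Chat ∪ Qhat) Ihat :=
    ⟨Set.disjoint_union_left.mpr ⟨hdisjCI, hdisjIQ.symm⟩, by rw [← hcover, Set.union_right_comm],
      Set.pairwise_union.mpr ⟨hC, hQ, fun c hc q hq _ => ⟨(hQC q hq c hc).symm, hQC q hq c hc⟩⟩, hI⟩
  have hIhat : Ihat ⊆ alwaysIndep G := by
    intro i hi C I hP'
    obtain ⟨q, hq, q', hq', hqq'⟩ := hQ2
    refine (hP'.mem_or_mem i).resolve_left fun hiC => ?_
    obtain hqC | hqC := hP'.mem_clique_or_mem_clique (hQ hq hq' hqq')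
    · exact hQI q hq i hi (hP'.isClique hqC hiC (hdisjIQ.ne_of_mem hi hq).symm)
    · exact hQI q' hq' i hi (hP'.isClique hqC hiC (hdisjIQ.ne_of_mem hi hq').symm)
  have hChat : Chat ⊆ alwaysClique G := fun c hc C I hP' =>
    let ⟨i, hi, hci⟩ := hCI c hc
    hP'.mem_clique_of_adj hci (hIhat hi C I hP')
  have hQhat : Qhat ⊆ questioning G := fun q hq =>
    ⟨⟨_, _, hP, Or.inr hq⟩, ⟨_, _, hP.diff_singleton_insert (hQI q hq), Set.mem_insert q _⟩⟩
  obtain ⟨hC', hI', hQ'⟩ := eq_of_union_eq_univ_of_subset_of_disjoint hcover hChat hIhat hQhat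
    (disjoint_alwaysClique_alwaysIndep ⟨_, _, hP⟩) disjoint_alwaysClique_questioning
    disjoint_alwaysIndep_questioning
  exact ⟨⟨_, _, hP⟩, hC', hI', hQ'⟩

end

theorem split_partition_characterization_general {V : Type*} (G : SimpleGraph V)
    (Chat Ihat Qhat : Set V)
    (hdisjCI : Disjoint Chat Ihat) (hdisjCQ : Disjoint Chat Qhat)
    (hdisjIQ : Disjoint Ihat Qhat) (hcover : Chat ∪ Ihat ∪ Qhat = Set.univ)
    (h1C : G.IsClique Chat) (h1I : IsIndep G Ihat)
    (h2 : G.IsClique Qhat ∨ IsIndep G Qhat) (h2' : 2 ≤ Qhat.ncard)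
    (h3 : ∀ v ∈ Qhat, (∀ u ∈ Chat, G.Adj v u) ∧ (∀ u ∈ Ihat, ¬ G.Adj v u))
    (h4 : G.IsClique Qhat → ∀ v ∈ Chat, ∃ u ∈ Ihat, G.Adj v u)
    (h5 : IsIndep G Qhat → ∀ v ∈ Ihat, ∃ u ∈ Chat, ¬ G.Adj v u) :
    IsSplit G ∧ alwaysClique G = Chat ∧ alwaysIndep G = Ihat ∧ questioning G = Qhat := by
  have hQ2 : Qhat.Nontrivial := (Set.one_lt_ncard_iff_nontrivial_and_finite.mp h2').1
  rcases h2 with hQ | hQ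
  · exact split_partition_characterization_of_isClique hdisjCI hdisjIQ hcover h1C h1I hQ hQ2
      (fun q hq => (h3 q hq).1) (fun q hq => (h3 q hq).2) (h4 hQ)
  · have h := split_partition_characterization_of_isClique (G := Gᶜ) hdisjCI.symm hdisjCQ
      (Set.union_comm Ihat Chat ▸ hcover) (G.isClique_compl.mpr h1I)
      (G.isIndepSet_compl.mpr h1C) (G.isClique_compl.mpr hQ) hQ2
      (fun q hq i hi => (G.compl_adj q i).mpr ⟨(hdisjIQ.ne_of_mem hi hq).symm, (h3 q hq).2 i hi⟩)
      (fun q hq c hc hqc => ((G.compl_adj q c).mp hqc).2 ((h3 q hq).1 c hc))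
      (fun i hi => let ⟨c, hc, hic⟩ := h5 hQ i hi
        ⟨c, hc, (G.compl_adj i c).mpr ⟨(hdisjCI.ne_of_mem hc hi).symm, hic⟩⟩)
    rw [isSplit_compl, alwaysClique_compl, alwaysIndep_compl, questioning_compl] at h
    exact ⟨h.1, h.2.2.1, h.2.1, h.2.2.2⟩

/-- Suppose `{Ĉ, Î, Q̂}` is a partition of `V(G)` (parts may be empty)
such that: (1) `Ĉ` is a clique and `Î` is an independent set; (2) `Q̂` is a clique or an
independent set and `|Q̂| ≥ 2`; (3) every vertex of `Q̂` is adjacent to every vertex of `Ĉ`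
and non-adjacent to every vertex of `Î`; (4) if `Q̂` is a clique then every vertex of `Ĉ`
has a neighbor in `Î`; (5) if `Q̂` is an independent set then every vertex of `Î` has a
non-neighbor in `Ĉ`. Then `G` is a split graph with always-clique set `Ĉ`,
always-independent set `Î`, and questioning set `Q̂`. -/
theorem split_partition_characterization {V : Type*} [Fintype V] (G : SimpleGraph V)
    (Chat Ihat Qhat : Set V)
    (hdisjCI : Disjoint Chat Ihat) (hdisjCQ : Disjoint Chat Qhat)
    (hdisjIQ : Disjoint Ihat Qhat) (hcover : Chat ∪ Ihat ∪ Qhat = Set.univ)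
    (h1C : G.IsClique Chat) (h1I : IsIndep G Ihat)
    (h2 : G.IsClique Qhat ∨ IsIndep G Qhat) (h2' : 2 ≤ Qhat.ncard)
    (h3 : ∀ v ∈ Qhat, (∀ u ∈ Chat, G.Adj v u) ∧ (∀ u ∈ Ihat, ¬ G.Adj v u))
    (h4 : G.IsClique Qhat → ∀ v ∈ Chat, ∃ u ∈ Ihat, G.Adj v u)
    (h5 : IsIndep G Qhat → ∀ v ∈ Ihat, ∃ u ∈ Chat, ¬ G.Adj v u) :
    IsSplit G ∧ alwaysClique G = Chat ∧ alwaysIndep G = Ihat ∧ questioning G = Qhat :=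
  split_partition_characterization_general G Chat Ihat Qhat hdisjCI hdisjCQ hdisjIQ hcover h1C h1I
    h2 h2' h3 h4 h5
end
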